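/- arXiv:2003.04481 — 3 statements merged into one kernel-verified Lean document; each statement's English description precedes it below -/
import Mathlib

section
/- For every Ψ with 0 < Ψ ≤ p + s, the capacity condition R(Ψ) ≤ B·A₂(Ψ) holds if and only if Ψ ≥ Ψ₂; equivalently, Ψ₂ is the unique positive root of the quadratic (B/2)Ψ² + (1 − p − s)(B + 1)Ψ − (1 − p − s) = 0. -/
/-- Requesters' share. -/
noncomputable def R (p s Ψ : ℝ) : ℝ := (1 - Ψ) * (1 - p - s)

/-- Agents' share in the low-benefit regime. -/
noncomputable def A₂ (p s Ψ : ℝ) : ℝ := Ψ ^ 2 / 2 + (1 - p - s) * Ψ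

/-- Threshold Ψ₂. -/
noncomputable def Ψ₂ (p s B : ℝ) : ℝ :=
  -(1 - p - s) * (1 + 1 / B) +
    Real.sqrt (1 - p - s) * Real.sqrt ((1 - p - s) * (1 + 1 / B) ^ 2 + 2 / B)

theorem stmt_1 (p s B : ℝ) (hs : 0 < s) (hsp : s < p) (hps : p + s < 1) (hB : 0 < B) :
    (∀ Ψ : ℝ, 0 < Ψ → Ψ ≤ p + s →
      (R p s Ψ ≤ B * A₂ p s Ψ ↔ Ψ₂ p s B ≤ Ψ)) ∧
    (0 < Ψ₂ p s B ∧
      (B / 2) * (Ψ₂ p s B) ^ 2 + (1 - p - s) * (B + 1) * (Ψ₂ p s B) - (1 - p - s) = 0 ∧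
      ∀ x : ℝ, 0 < x → (B / 2) * x ^ 2 + (1 - p - s) * (B + 1) * x - (1 - p - s) = 0 →
        x = Ψ₂ p s B) := by
  have hc : (0:ℝ) < 1 - p - s := by linarith
  have hB' : B ≠ 0 := ne_of_gt hB
  have hBe : B * (1/B) = 1 := by field_simp
  set q := Real.sqrt ((1 - p - s)^2 * (1 + 1/B)^2 + 2*(1 - p - s)/B) with hq_def
  have hD : (0:ℝ) < (1 - p - s)^2 * (1 + 1/B)^2 + 2*(1 - p - s)/B := by positivity
  have hq2 : q^2 = (1 - p - s)^2 * (1 + 1/B)^2 + 2*(1 - p - s)/B := Real.sq_sqrt hD.le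
  have hψeq : Ψ₂ p s B = -(1 - p - s)*(1 + 1/B) + q := by
    unfold Ψ₂
    rw [hq_def, ← Real.sqrt_mul hc.le]
    congr 2
    ring
  have hqpos : (1 - p - s)*(1 + 1/B) < q := by
    rw [hq_def]
    refine (Real.lt_sqrt (by positivity)).mpr ?_
    have h2 : (0:ℝ) < 2*(1 - p - s)/B := by positivity
    nlinarith
  have hpos : 0 < Ψ₂ p s B := by rw [hψeq]; linarith
  have hroot : (B / 2) * (Ψ₂ p s B) ^ 2 + (1 - p - s) * (B + 1) * (Ψ₂ p s B) - (1 - p - s) = 0 := by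
    rw [hψeq]
    linear_combination (B/2)*hq2 + ((1 - p - s)^2*(1 + 1/B) + (1 - p - s) - (1 - p - s)*q)*hBe
  refine ⟨?_, hpos, hroot, ?_⟩
  · intro Ψ hΨ _
    have hM : 0 < (B/2)*(Ψ + Ψ₂ p s B) + (1 - p - s)*(B + 1) := by
      have h1 : 0 < B*(Ψ + Ψ₂ p s B) := mul_pos hB (by linarith)
      have h2 : 0 < (1 - p - s)*(B + 1) := mul_pos hc (by linarith)
      linarith
    have hid : B*(Ψ^2/2 + (1 - p - s)*Ψ) - (1 - Ψ)*(1 - p - s)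
        = (Ψ - Ψ₂ p s B)*((B/2)*(Ψ + Ψ₂ p s B) + (1 - p - s)*(B + 1)) := by
      linear_combination hroot
    simp only [R, A₂]
    constructor
    · intro h
      by_contra hcon
      push_neg at hcon
      have hneg : (Ψ - Ψ₂ p s B)*((B/2)*(Ψ + Ψ₂ p s B) + (1 - p - s)*(B + 1)) < 0 :=
        mul_neg_of_neg_of_pos (by linarith) hM
      linarith
    · intro h
      have hnn : 0 ≤ (Ψ - Ψ₂ p s B)*((B/2)*(Ψ + Ψ₂ p s B) + (1 - p - s)*(B + 1)) :=
        mul_nonneg (by linarith) hM.le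
      linarith
  · intro x hx hxeq
    have key : (x - Ψ₂ p s B)*((B/2)*(x + Ψ₂ p s B) + (1 - p - s)*(B + 1)) = 0 := by
      linear_combination hxeq - hroot
    rcases mul_eq_zero.mp key with h | h
    · linarith
    · exfalso
      have h1 : 0 < B*(x + Ψ₂ p s B) := mul_pos hB (by linarith)
      have h2 : 0 < (1 - p - s)*(B + 1) := mul_pos hc (by linarith)
      linarith
end

section
/- Suppose B > 2(1 − p − s)²/(1 − (1 − p − s)²) and η satisfies Ψ₂/(Bp) + s/p ≤ η ≤ (p + s)²(2 − p − s)/(2p(1 − p − s)²) + s/p. Then there exists exactly one Ψ in the interval [Ψ₂, p + s] such that Ψ·A₂(Ψ) = (ηp − s)·R(Ψ). -/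
set_option maxHeartbeats 1000000

private lemma mono_aux (q c x y : ℝ) (hq : 0 < q) (hc : 0 ≤ c) (hx0 : 0 < x)
    (hxy : x < y) :
    x * (x ^ 2 / 2 + q * x) - c * ((1 - x) * q) <
      y * (y ^ 2 / 2 + q * y) - c * ((1 - y) * q) := by
  have hy0 : 0 < y := hx0.trans hxy
  nlinarith [mul_pos (sub_pos.2 hxy) (mul_pos hx0 hx0),
    mul_pos (sub_pos.2 hxy) (mul_pos hx0 hy0),
    mul_pos (sub_pos.2 hxy) (mul_pos hy0 hy0),
    mul_nonneg (mul_nonneg hc hq.le) (sub_pos.2 hxy).le,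
    mul_pos hq (mul_pos (sub_pos.2 hxy) (add_pos hx0 hy0))]

theorem stmt_10 (p s B η : ℝ) (hs : 0 < s) (hsp : s < p) (hps : p + s < 1) (hB : 0 < B)
    (hη₀ : s / p ≤ η) (hη₁ : η ≤ 1)
    (hBgt : B > 2 * (1 - p - s) ^ 2 / (1 - (1 - p - s) ^ 2))
    (hηlo : Ψ₂ p s B / (B * p) + s / p ≤ η)
    (hηhi : η ≤ (p + s) ^ 2 * (2 - p - s) / (2 * p * (1 - p - s) ^ 2) + s / p) :
    ∃! Ψ : ℝ, Ψ ∈ Set.Icc (Ψ₂ p s B) (p + s) ∧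
      Ψ * A₂ p s Ψ = (η * p - s) * R p s Ψ := by
  have hp : 0 < p := hs.trans hsp
  have hq : 0 < 1 - p - s := by linarith
  have hq1 : 1 - p - s < 1 := by linarith
  have hBne : B ≠ 0 := ne_of_gt hB
  have hc : 0 ≤ η * p - s := by
    have := (div_le_iff₀ hp).mp hη₀
    linarith
  set c := η * p - s with hc_def
  set a := (1 - p - s) * (1 + 1 / B) ^ 2 + 2 / B with ha_def
  have hapos : 0 < a := by positivity
  set r := Real.sqrt (1 - p - s) * Real.sqrt a with hr_def
  have hrnn : 0 ≤ r := by positivity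
  have hr2 : r ^ 2 = (1 - p - s) * a := by
    rw [hr_def, mul_pow, Real.sq_sqrt hq.le, Real.sq_sqrt hapos.le]
  have hΨdef : Ψ₂ p s B = -(1 - p - s) * (1 + 1 / B) + r := rfl
  clear_value c a r
  -- key identity
  have hlin : B * Ψ₂ p s B + (1 - p - s) * (B + 1) = B * r := by
    rw [hΨdef]; field_simp; ring
  have haB : a * B ^ 2 = (1 - p - s) * (B + 1) ^ 2 + 2 * B := by
    rw [ha_def]; field_simp
  have hsq' : (B * Ψ₂ p s B + (1 - p - s) * (B + 1)) ^ 2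
      = (1 - p - s) * ((1 - p - s) * (B + 1) ^ 2 + 2 * B) := by
    rw [hlin, ← haB]
    rw [mul_pow]
    rw [hr2]; ring
  have hid : B * ((Ψ₂ p s B) ^ 2 / 2 + (1 - p - s) * Ψ₂ p s B)
      = (1 - p - s) * (1 - Ψ₂ p s B) := by
    have h : B * (B * ((Ψ₂ p s B) ^ 2 / 2 + (1 - p - s) * Ψ₂ p s B))
        = B * ((1 - p - s) * (1 - Ψ₂ p s B)) := by linear_combination hsq' / 2
    exact mul_left_cancel₀ hBne h
  -- Ψ₂ > 0
  have hΨpos : 0 < Ψ₂ p s B := by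
    have h1 : ((1 - p - s) * (1 + 1 / B)) ^ 2 < r ^ 2 := by
      rw [hr2, ha_def]
      have : 0 < 2 / B := by positivity
      nlinarith [hq]
    have h2 : (1 - p - s) * (1 + 1 / B) < r :=
      lt_of_pow_lt_pow_left₀ 2 hrnn h1
    rw [hΨdef]; linarith
  -- Ψ₂ ≤ p + s
  have hΨle : Ψ₂ p s B ≤ p + s := by
    have hBgt' : 2 * (1 - p - s) ^ 2 < B * (1 - (1 - p - s) ^ 2) := by
      rw [gt_iff_lt, div_lt_iff₀ (by nlinarith : (0:ℝ) < 1 - (1 - p - s) ^ 2)] at hBgt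
      linarith
    have h1 : (B * r) ^ 2 = (1 - p - s) * ((1 - p - s) * (B + 1) ^ 2 + 2 * B) := by
      rw [mul_pow, hr2, ← haB]; ring
    have h2 : (B * r) ^ 2 ≤ (B + (1 - p - s)) ^ 2 := by
      rw [h1]; nlinarith [hBgt', hq, hB]
    have h3 : B * r ≤ B + (1 - p - s) := by
      nlinarith [h2, mul_nonneg hB.le hrnn, hB, hq]
    have h4 : B * Ψ₂ p s B ≤ B * (p + s) := by nlinarith [h3, hlin, hB]
    exact le_of_mul_le_mul_left h4 hB
  -- the function
  set f : ℝ → ℝ := fun Ψ => Ψ * A₂ p s Ψ - c * R p s Ψ with hf_def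
  clear_value f
  have hmono : StrictMonoOn f (Set.Icc (Ψ₂ p s B) (p + s)) := by
    intro x hx y hy hxy
    have hx0 : 0 < x := lt_of_lt_of_le hΨpos hx.1
    simp only [hf_def, A₂, R]
    exact mono_aux (1 - p - s) c x y hq hc hx0 hxy
  have hcont : ContinuousOn f (Set.Icc (Ψ₂ p s B) (p + s)) := by
    apply Continuous.continuousOn
    simp only [hf_def, A₂, R]
    fun_prop
  -- f Ψ₂ ≤ 0
  have hΨltc : Ψ₂ p s B ≤ c * B := by
    have h := mul_le_mul_of_nonneg_right hηlo hp.le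
    have hexp : (Ψ₂ p s B / (B * p) + s / p) * p = Ψ₂ p s B / B + s := by
      field_simp
    rw [hexp] at h
    have : Ψ₂ p s B / B ≤ c := by linarith [h]
    calc Ψ₂ p s B = Ψ₂ p s B / B * B := by field_simp
      _ ≤ c * B := mul_le_mul_of_nonneg_right this hB.le
  have hfa : f (Ψ₂ p s B) ≤ 0 := by
    have hA : 0 ≤ (Ψ₂ p s B) ^ 2 / 2 + (1 - p - s) * Ψ₂ p s B := by positivity
    have h1 := mul_le_mul_of_nonneg_right hΨltc hA
    have h2 : c * ((1 - Ψ₂ p s B) * (1 - p - s))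
        = c * B * ((Ψ₂ p s B) ^ 2 / 2 + (1 - p - s) * Ψ₂ p s B) := by
      linear_combination (-c) * hid
    simp only [hf_def, A₂, R]
    linarith [h1, h2]
  -- f (p+s) ≥ 0
  have hfb : 0 ≤ f (p + s) := by
    have h := mul_le_mul_of_nonneg_right hηhi hp.le
    have hexp : ((p + s) ^ 2 * (2 - p - s) / (2 * p * (1 - p - s) ^ 2) + s / p) * p
        = (p + s) ^ 2 * (2 - p - s) / (2 * (1 - p - s) ^ 2) + s := by
      field_simp
    rw [hexp] at h
    have hcle : c ≤ (p + s) ^ 2 * (2 - p - s) / (2 * (1 - p - s) ^ 2) := by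
      simp only [hc_def]; linarith [h]
    have hcq : c * (1 - p - s) ^ 2 ≤ (p + s) ^ 2 * (2 - p - s) / 2 := by
      have h2 := (le_div_iff₀ (by positivity : (0:ℝ) < 2 * (1 - p - s) ^ 2)).mp hcle
      linarith [h2]
    simp only [hf_def, A₂, R]
    linarith [hcq]
  -- existence via IVT
  have hsub := intermediate_value_Icc hΨle hcont
  have h0mem : (0 : ℝ) ∈ Set.Icc (f (Ψ₂ p s B)) (f (p + s)) := ⟨hfa, hfb⟩
  obtain ⟨Ψ, hΨmem, hfΨ⟩ := hsub h0mem
  refine ⟨Ψ, ⟨hΨmem, ?_⟩, ?_⟩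
  · have : f Ψ = 0 := hfΨ
    simp only [hf_def] at this
    linarith [this]
  · rintro y ⟨hymem, hyeq⟩
    have hfy : f y = 0 := by simp only [hf_def]; linarith [hyeq]
    exact hmono.injOn hymem hΨmem (by rw [hfy, hfΨ])
end

section
/- Suppose B > 2(1 − p − s)²/(1 − (1 − p − s)²) and η satisfies (p + s)²(2 − p − s)/(2p(1 − p − s)²) + s/p < η ≤ 1. Then no Ψ in the interval [0, p + s] is a low-benefit equilibrium; that is, there is no Ψ ∈ [0, p + s] with either (Ψ ≥ Ψ₂ and Ψ·A₂(Ψ) = (ηp − s)·R(Ψ)) or (Ψ < Ψ₂ and Ψ = (ηp − s)·B). -/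
theorem stmt_11 (p s B η : ℝ) (hs : 0 < s) (hsp : s < p) (hps : p + s < 1) (hB : 0 < B)
    (hη₀ : s / p ≤ η) (hη₁ : η ≤ 1)
    (hBgt : B > 2 * (1 - p - s) ^ 2 / (1 - (1 - p - s) ^ 2))
    (hηlo : (p + s) ^ 2 * (2 - p - s) / (2 * p * (1 - p - s) ^ 2) + s / p < η) :
    ¬ ∃ Ψ ∈ Set.Icc 0 (p + s),
        (Ψ₂ p s B ≤ Ψ ∧ Ψ * A₂ p s Ψ = (η * p - s) * R p s Ψ) ∨
        (Ψ < Ψ₂ p s B ∧ Ψ = (η * p - s) * B) := by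
  rintro ⟨Ψ, ⟨h0, h1⟩, hcase⟩
  have hp : 0 < p := hs.trans hsp
  have hc : 0 < 1 - p - s := by linarith
  have hc1 : 1 - p - s < 1 := by linarith
  have hden : 0 < 2 * p * (1 - p - s) ^ 2 := by positivity
  -- key: (p+s)^2 (2-p-s) < 2 (ηp - s) (1-p-s)^2
  have hkey : (p + s) ^ 2 * (2 - p - s) < 2 * (η * p - s) * (1 - p - s) ^ 2 := by
    have h2 : (p + s) ^ 2 * (2 - p - s) < (η - s / p) * (2 * p * (1 - p - s) ^ 2) :=
      (div_lt_iff₀ hden).mp (by linarith)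
    have h3 : (η - s / p) * p = η * p - s := by field_simp
    nlinarith [h2, h3, sq_nonneg (1 - p - s)]
  have hk : 0 < η * p - s := by nlinarith [sq_nonneg (1 - p - s), sq_nonneg (p + s)]
  rcases hcase with ⟨-, heq⟩ | ⟨-, heq⟩
  · -- case 1
    simp only [A₂, R] at heq
    have hΨ3 : Ψ ^ 3 ≤ (p + s) ^ 3 := pow_le_pow_left₀ h0 h1 3
    have hΨ2 : Ψ ^ 2 ≤ (p + s) ^ 2 := pow_le_pow_left₀ h0 h1 2
    have hR : (η * p - s) * (1 - p - s) * (1 - p - s) ≤ (η * p - s) * (1 - Ψ) * (1 - p - s) := by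
      have h4 : 1 - p - s ≤ 1 - Ψ := by linarith
      exact mul_le_mul_of_nonneg_right (mul_le_mul_of_nonneg_left h4 hk.le) hc.le
    nlinarith [heq, hΨ3, hΨ2, hR, hc.le, mul_le_mul_of_nonneg_left hΨ2 hc.le]
  · -- case 2
    have hcc : 0 < 1 - (1 - p - s) ^ 2 := by nlinarith
    have hB2 : 2 * (1 - p - s) ^ 2 < B * (1 - (1 - p - s) ^ 2) :=
      (div_lt_iff₀ hcc).mp hBgt
    have hfac : (p + s) * (1 - (1 - p - s) ^ 2) = (p + s) ^ 2 * (2 - p - s) := by ring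
    have e1 : (η * p - s) * (2 * (1 - p - s) ^ 2) <
        (η * p - s) * (B * (1 - (1 - p - s) ^ 2)) := mul_lt_mul_of_pos_left hB2 hk
    have e2 : (p + s) * (1 - (1 - p - s) ^ 2) <
        ((η * p - s) * B) * (1 - (1 - p - s) ^ 2) := by nlinarith [e1, hfac, hkey]
    have e3 : p + s < (η * p - s) * B := lt_of_mul_lt_mul_right e2 hcc.le
    linarith [heq ▸ h1]
end
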